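/- arXiv:1804.03298 — 3 statements merged into one kernel-verified Lean document; each statement's English description precedes it below -/
import Mathlib

section
/- Let n be a positive integer, let Ñ, X : Fin n → ℂ, let M̃, Y ∈ ℂ, let W be an n×n complex matrix, and let γ > 0. Define A := W * (X Ñᵀ), where X Ñᵀ is the n×n matrix with (i,j) entry Xᵢ·Ñⱼ, and D := (∑ i, Ñᵢ·Xᵢ) + M̃·Y. If D ≠ 0 and ‖D⁻¹ • A‖ < γ, then there exists a complex number f with |f| = 1 such that γ⁻¹·‖f • A‖ < Re(D · f). -/
noncomputable def l2OpNorm {n : ℕ} (A : Matrix (Fin n) (Fin n) ℂ) : ℝ :=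
  ‖Matrix.toEuclideanCLM (𝕜 := ℂ) A‖

lemma l2OpNorm_nonneg {n : ℕ} (A : Matrix (Fin n) (Fin n) ℂ) : 0 ≤ l2OpNorm A :=
  norm_nonneg _

lemma l2OpNorm_smul {n : ℕ} (c : ℂ) (A : Matrix (Fin n) (Fin n) ℂ) :
    l2OpNorm (c • A) = ‖c‖ * l2OpNorm A := by
  rw [l2OpNorm, map_smul, norm_smul, l2OpNorm]

/-- Rotating by `exp (-i arg D)` turns `D` into the real number `‖D‖`. -/
lemma Complex.exists_norm_eq_one_mul_eq_norm (D : ℂ) : ∃ f : ℂ, ‖f‖ = 1 ∧ D * f = ‖D‖ := by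
  refine ⟨exp (↑(-D.arg) * I), norm_exp_ofReal_mul_I _, ?_⟩
  calc D * exp (↑(-D.arg) * I) = ‖D‖ * exp (D.arg * I) * exp (↑(-D.arg) * I) := by
        rw [norm_mul_exp_arg_mul_I]
    _ = ‖D‖ := by
        rw [mul_assoc, ← exp_add, ofReal_neg, neg_mul, add_neg_cancel, exp_zero, mul_one]

theorem convex_condition_of_hinf_bound_general {n : ℕ}
    (γ : ℝ)
    (A : Matrix (Fin n) (Fin n) ℂ)
    (D : ℂ)
    (hD0 : D ≠ 0) (h : l2OpNorm (D⁻¹ • A) < γ) :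
    ∃ f : ℂ, ‖f‖ = 1 ∧ γ⁻¹ * l2OpNorm (f • A) < (D * f).re := by
  obtain ⟨f, hf, hDf⟩ := D.exists_norm_eq_one_mul_eq_norm
  refine ⟨f, hf, ?_⟩
  rw [l2OpNorm_smul, hf, one_mul, hDf, Complex.ofReal_re]
  rw [l2OpNorm_smul, norm_inv] at h
  have hD : 0 < ‖D‖ := norm_pos_iff.mpr hD0
  have hγ : 0 < γ := (mul_nonneg (inv_nonneg.mpr hD.le) (l2OpNorm_nonneg A)).trans_lt h
  rw [inv_mul_lt_iff₀ hD] at h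
  rw [inv_mul_lt_iff₀ hγ, mul_comm]
  exact h

/-- (Pointwise content of Theorem 1, direction I ⇒ II.)
With `A = W * (X Ñᵀ)` and `D = ∑ i, Ñᵢ Xᵢ + M̃ Y`, if `D ≠ 0` and `‖D⁻¹ • A‖ < γ`,
then there exists a unimodular `f` with `γ⁻¹ ‖f • A‖ < Re (D * f)`. -/
theorem convex_condition_of_hinf_bound {n : ℕ} (hn : 0 < n)
    (Ntil X : Fin n → ℂ) (Mtil Y : ℂ) (W : Matrix (Fin n) (Fin n) ℂ)
    (γ : ℝ) (hγ : 0 < γ)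
    (A : Matrix (Fin n) (Fin n) ℂ) (hA : A = W * Matrix.vecMulVec X Ntil)
    (D : ℂ) (hD : D = (∑ i, Ntil i * X i) + Mtil * Y)
    (hD0 : D ≠ 0) (h : l2OpNorm (D⁻¹ • A) < γ) :
    ∃ f : ℂ, ‖f‖ = 1 ∧ γ⁻¹ * l2OpNorm (f • A) < (D * f).re :=
  convex_condition_of_hinf_bound_general γ A D hD0 h
end

section
/- Let Γ ∈ ℝ and a, p, p₀ ∈ ℂ. Define d := 2·Re(conj(p₀)·p) − |p₀|². If d > 0 and Γ·d > |a|², then p ≠ 0 and |a|²/|p|² < Γ (equivalently |a·p⁻¹|² < Γ). -/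
/-!
Since `|p - p₀|² ≥ 0`, the surrogate `d = 2 Re (conj p₀ p) - |p₀|²` is a lower bound for `|p|²`.
Hence `d > 0` forces `p ≠ 0`, and `|a|² < Γ d ≤ Γ |p|²`.
-/

theorem two_mul_re_inner_sub_norm_sq_le {𝕜 E : Type*} [RCLike 𝕜] [SeminormedAddCommGroup E]
    [InnerProductSpace 𝕜 E] (x y : E) :
    2 * RCLike.re (inner 𝕜 x y) - ‖x‖ ^ 2 ≤ ‖y‖ ^ 2 := by
  nlinarith [norm_sub_sq (𝕜 := 𝕜) x y, sq_nonneg ‖x - y‖]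

theorem Complex.two_mul_re_conj_mul_sub_norm_sq_le (w z : ℂ) :
    2 * ((starRingEnd ℂ) w * z).re - ‖w‖ ^ 2 ≤ ‖z‖ ^ 2 := by
  simpa [RCLike.inner_apply, mul_comm] using two_mul_re_inner_sub_norm_sq_le (𝕜 := ℂ) w z

theorem div_lt_of_lt_mul_of_le {x y c d : ℝ} (hx : 0 ≤ x) (hd : 0 < d) (hdy : d ≤ y)
    (h : x < c * d) : x / y < c := by
  have hc : 0 < c := pos_of_mul_pos_left (hx.trans_lt h) hd.le
  rw [div_lt_iff₀ (hd.trans_le hdy)]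
  exact h.trans_le (mul_le_mul_of_nonneg_left hdy hc.le)

/-- (Scalar single-frequency mechanism of Theorem 2.)
With `d = 2 Re (conj p₀ * p) - |p₀|²`, if `d > 0` and `Γ d > |a|²` then `p ≠ 0`
and `|a|² / |p|² < Γ`. -/
theorem gamma_bounds_squared_gain (Γ : ℝ) (a p p₀ : ℂ)
    (d : ℝ) (hd : d = 2 * ((starRingEnd ℂ) p₀ * p).re - ‖p₀‖ ^ 2)
    (hdpos : 0 < d) (h : ‖a‖ ^ 2 < Γ * d) :
    p ≠ 0 ∧ ‖a‖ ^ 2 / ‖p‖ ^ 2 < Γ := by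
  have hdp : d ≤ ‖p‖ ^ 2 := hd ▸ Complex.two_mul_re_conj_mul_sub_norm_sq_le p₀ p
  refine ⟨?_, div_lt_of_lt_mul_of_le (sq_nonneg _) hdpos hdp h⟩
  rintro rfl
  simp only [norm_zero, ne_eq, OfNat.ofNat_ne_zero, not_false_eq_true, zero_pow] at hdp
  exact hdpos.not_ge hdp
end

section
/- Let n ≥ 1, let Γ be an n×n Hermitian complex matrix, let v ∈ ℂⁿ be a (column) vector, and let p, p₀ ∈ ℂ. Define d := 2·Re(conj(p₀)·p) − |p₀|², a real number. Suppose the (n+1)×(n+1) Hermitian block matrix [[Γ, v],[vᴴ, d]] (with Γ in the top-left block, v the last column, vᴴ the last row, and d the bottom-right scalar) is positive definite. Then p ≠ 0 and the matrix Γ − |p|⁻² • (v·vᴴ) is positive definite, where v·vᴴ is the n×n rank-one matrix with (i,j) entry vᵢ·conj(vⱼ). -/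
open Matrix
open scoped ComplexOrder

/-!
The bottom-right entry `d` of the block matrix is positive, so the Schur complement
`Γ - d⁻¹ • v vᴴ` is positive definite. Since `|p - p₀|² ≥ 0`, the affine surrogate satisfies
`d ≤ |p|²`; hence `|p|² > 0` and `Γ - |p|⁻² • v vᴴ` differs from the Schur complement by the
positive semidefinite matrix `(d⁻¹ - |p|⁻²) • v vᴴ`.
-/

theorem Matrix.PosDef.toBlocks₂₂ {m n R : Type*} [Ring R] [PartialOrder R] [StarRing R]
    {M : Matrix (m ⊕ n) (m ⊕ n) R} (hM : M.PosDef) : M.toBlocks₂₂.PosDef :=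
  hM.submatrix Sum.inr_injective

theorem Matrix.PosDef.schur_complement₂₂ {m n K : Type*} [Fintype m] [Fintype n] [DecidableEq n]
    [Field K] [PartialOrder K] [StarRing K] {A : Matrix m m K} {B : Matrix m n K}
    {D : Matrix n n K} (h : (fromBlocks A B Bᴴ D).PosDef) : (A - B * D⁻¹ * Bᴴ).PosDef := by
  have hD : D.PosDef := by simpa using h.toBlocks₂₂
  let := hD.isUnit.invertible
  refine .of_dotProduct_mulVec_pos ((IsHermitian.fromBlocks₂₂ A B hD.1).1 h.1) fun x hx => ?_
  have hxy : x ⊕ᵥ -((D⁻¹ * Bᴴ) *ᵥ x) ≠ 0 := fun h0 =>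
    hx (by simpa using congrArg (· ∘ Sum.inl) h0)
  simpa [schur_complement_eq₂₂ A B _ _ hD.1, dotProduct_mulVec] using h.dotProduct_mulVec_pos hxy

section RankOne

variable {n 𝕜 : Type*} [RCLike 𝕜]

theorem Matrix.replicateCol_mul_inv_mul_conjTranspose (v : n → 𝕜) (c : 𝕜) :
    replicateCol Unit v * (of fun _ _ => c : Matrix Unit Unit 𝕜)⁻¹ * (replicateCol Unit v)ᴴ =
      c⁻¹ • vecMulVec v (star v) := by
  ext i j
  simp [mul_apply, vecMulVec_apply]
  ring

theorem Matrix.PosDef.sub_smul_of_le {A P : Matrix n n 𝕜} {a b : ℝ} (hA : (A - a • P).PosDef)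
    (hP : P.PosSemidef) (hba : b ≤ a) : (A - b • P).PosDef := by
  have : A - b • P = (A - a • P) + (a - b) • P := by module
  exact this ▸ hA.add_posSemidef (hP.smul (sub_nonneg.2 hba))

end RankOne

theorem Complex.two_mul_re_conj_mul_sub_sq_norm_le (p p₀ : ℂ) :
    2 * (starRingEnd ℂ p₀ * p).re - ‖p₀‖ ^ 2 ≤ ‖p‖ ^ 2 := by
  have h := Complex.normSq_nonneg (p - p₀)
  rw [Complex.normSq_sub, mul_comm p] at h
  simp only [Complex.sq_norm]
  linarith

theorem schur_block_lmi_implies_rank_one_bound_general {n : ℕ}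
    (Γ : Matrix (Fin n) (Fin n) ℂ)
    (v : Fin n → ℂ) (p p₀ : ℂ)
    (d : ℝ) (hd : d = 2 * ((starRingEnd ℂ) p₀ * p).re - ‖p₀‖ ^ 2)
    (hpd : (Matrix.fromBlocks Γ
        (Matrix.of fun i (_ : Unit) => v i)
        (Matrix.of fun (_ : Unit) j => (starRingEnd ℂ) (v j))
        (Matrix.of fun (_ : Unit) (_ : Unit) => (d : ℂ))).PosDef) :
    p ≠ 0 ∧
      (Γ - (‖p‖ ^ 2)⁻¹ • Matrix.vecMulVec v (star v)).PosDef := by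
  have hblock : (fromBlocks Γ (replicateCol Unit v) (replicateCol Unit v)ᴴ
      (of fun _ _ => (d : ℂ))).PosDef := hpd
  have hd_pos : 0 < d := by simpa using hblock.toBlocks₂₂.diag_pos (i := ())
  have hd_le : d ≤ ‖p‖ ^ 2 := hd ▸ Complex.two_mul_re_conj_mul_sub_sq_norm_le p p₀
  have hschur := hblock.schur_complement₂₂
  rw [replicateCol_mul_inv_mul_conjTranspose, ← Complex.ofReal_inv, Complex.coe_smul] at hschur
  exact ⟨by rintro rfl; norm_num at hd_le; linarith,
    hschur.sub_smul_of_le (posSemidef_vecMulVec_self_star v) (inv_anti₀ hd_pos hd_le)⟩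

/-- (Matrix form of the LMIs (40)–(41) of Theorem 2 at one
frequency point.) If the Hermitian block matrix `[[Γ, v], [vᴴ, d]]` with
`d = 2 Re (conj p₀ * p) - |p₀|²` is positive definite, then `p ≠ 0` and
`Γ - |p|⁻² • (v vᴴ)` is positive definite. -/
theorem schur_block_lmi_implies_rank_one_bound {n : ℕ} (hn : 1 ≤ n)
    (Γ : Matrix (Fin n) (Fin n) ℂ) (hΓ : Γ.IsHermitian)
    (v : Fin n → ℂ) (p p₀ : ℂ)
    (d : ℝ) (hd : d = 2 * ((starRingEnd ℂ) p₀ * p).re - ‖p₀‖ ^ 2)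
    (hpd : (Matrix.fromBlocks Γ
        (Matrix.of fun i (_ : Unit) => v i)
        (Matrix.of fun (_ : Unit) j => (starRingEnd ℂ) (v j))
        (Matrix.of fun (_ : Unit) (_ : Unit) => (d : ℂ))).PosDef) :
    p ≠ 0 ∧
      (Γ - (‖p‖ ^ 2)⁻¹ • Matrix.vecMulVec v (star v)).PosDef :=
  schur_block_lmi_implies_rank_one_bound_general Γ v p p₀ d hd hpd
end
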